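/- arXiv:1008.3204 — 2 statements merged into one kernel-verified Lean document; each statement's English description precedes it below -/
import Mathlib

section
/- Let φ = (1+√5)/2, c(m) = m/(φ+2), s(m) = √(φ·m/(5(φ+2))). Fix a real number x, and for each n let k_n = ⌊c(n) + x·s(n)⌋. Define S_n(k) = φ^{-n}·(n-k)^{n-k} / (k^k·(n-2k)^{n-2k}) for integers 0 < k < n/2. Then, as n → ∞, S_n(k_n) converges to e^{-x²/2}. -/
open Filter

/-- The golden mean `φ = (1+√5)/2`. -/
noncomputable def phi : ℝ := (1 + Real.sqrt 5) / 2

/-- Leading-order mean `c(m) = m/(φ+2)` of the number of non-forced Zeckendorf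
summands on `[F_m, F_{m+1})`. -/
noncomputable def cLead (m : ℕ) : ℝ := (m : ℝ) / (phi + 2)

/-- Leading-order standard deviation `s(m) = √(φ·m/(5(φ+2)))`. -/
noncomputable def sLead (m : ℕ) : ℝ := Real.sqrt (phi * (m : ℝ) / (5 * (phi + 2)))

/-- `S_n(k) = φ^{-n}·(n-k)^{n-k}/(k^k·(n-2k)^{n-2k})`, with real exponents. -/
noncomputable def Sfactor (n k : ℕ) : ℝ :=
  phi ^ (-(n : ℝ)) * ((n : ℝ) - (k : ℝ)) ^ ((n : ℝ) - (k : ℝ)) /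
    ((k : ℝ) ^ (k : ℝ) * ((n : ℝ) - 2 * (k : ℝ)) ^ ((n : ℝ) - 2 * (k : ℝ)))

/-!
Put `t = c(n)` and `u = k - t`, so that `k = t + u`, `n - k = φ²t - u` and `n - 2k = φt - 2u`.
Expanding `y log y = y log t' + (y - t') + t' K(y/t' - 1)` around `t' = t, φ²t, φt`, where
`K(w) = klFun (1 + w) = (1 + w) log (1 + w) - w`, the relation `φ² = φ + 1` cancels every term
of `log S_n(k)` except the three `t' K(·)`. Since `K(w) = w²/2 + O(w³)` and
`u = x s(n) + O(1) = O(√n)`, what is left is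
`u²/(2t) (1/φ² - 1 - 4/φ) + o(1) = -(5/(2φ)) u²/t + o(1)`,
and `u²/t → x² s(n)²/c(n) = φx²/5`.
-/

open Topology Real InformationTheory

lemma abs_log_one_add_sub_le {w : ℝ} (hw : |w| ≤ 1 / 2) :
    |log (1 + w) - (w - w ^ 2 / 2)| ≤ 2 * |w| ^ 3 := by
  have h := abs_log_sub_add_sum_range_le (x := -w) (by rw [abs_neg]; linarith) 2
  simp only [Finset.sum_range_succ, Finset.sum_range_zero, abs_neg, sub_neg_eq_add] at h
  calc |log (1 + w) - (w - w ^ 2 / 2)| ≤ |w| ^ 3 / (1 - |w|) := by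
        convert h using 2
        norm_num; ring
    _ ≤ 2 * |w| ^ 3 := by
        rw [div_le_iff₀ (by linarith)]
        nlinarith [pow_nonneg (abs_nonneg w) 3]

lemma abs_klFun_one_add_sub_le {w : ℝ} (hw : |w| ≤ 1 / 2) :
    |klFun (1 + w) - w ^ 2 / 2| ≤ 4 * |w| ^ 3 := by
  set E := log (1 + w) - (w - w ^ 2 / 2) with hE
  have hsplit : klFun (1 + w) - w ^ 2 / 2 = (1 + w) * E - w ^ 3 / 2 := by
    rw [hE, klFun]; ring
  have h1w : |1 + w| ≤ 3 / 2 := by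
    rw [abs_le] at hw ⊢; constructor <;> linarith
  calc |klFun (1 + w) - w ^ 2 / 2| ≤ |1 + w| * |E| + |w| ^ 3 / 2 := by
        rw [hsplit]
        refine (abs_sub _ _).trans_eq ?_
        rw [abs_mul, abs_div, abs_pow]; norm_num
    _ ≤ 3 / 2 * (2 * |w| ^ 3) + |w| ^ 3 / 2 := by
        gcongr; exact abs_log_one_add_sub_le hw
    _ ≤ 4 * |w| ^ 3 := by linarith [pow_nonneg (abs_nonneg w) 3]

lemma mul_log_add_eq {t u : ℝ} (ht : 0 < t) (htu : 0 < t + u) :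
    (t + u) * log (t + u) = (t + u) * log t + u + t * klFun (1 + u / t) := by
  have h : 1 + u / t = (t + u) / t := by field_simp
  rw [h, klFun, log_div htu.ne' ht.ne']
  field_simp
  ring

variable {ι : Type*} {l : Filter ι}

lemma tendsto_mul_klFun_one_add_div {t u : ι → ℝ} {L : ℝ}
    (hw : Tendsto (fun i => u i / t i) l (𝓝 0))
    (hL : Tendsto (fun i => u i ^ 2 / t i) l (𝓝 L)) :
    Tendsto (fun i => t i * klFun (1 + u i / t i)) l (𝓝 (L / 2)) := by
  have hsq : ∀ i, t i * (u i / t i) ^ 2 = u i ^ 2 / t i := fun i => by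
    rcases eq_or_ne (t i) 0 with h | h
    · simp [h]
    · field_simp
  suffices Tendsto (fun i => t i * klFun (1 + u i / t i) - u i ^ 2 / t i / 2) l (𝓝 0) by
    simpa using this.add (hL.div_const 2)
  have hbound : ∀ᶠ i in l,
      ‖t i * klFun (1 + u i / t i) - u i ^ 2 / t i / 2‖
        ≤ 4 * |u i ^ 2 / t i| * |u i / t i| := by
    filter_upwards [hw.eventually (Metric.closedBall_mem_nhds 0 one_half_pos)]
      with i hi
    rw [dist_zero_right, Real.norm_eq_abs] at hi
    calc ‖t i * klFun (1 + u i / t i) - u i ^ 2 / t i / 2‖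
        = |t i| * |klFun (1 + u i / t i) - (u i / t i) ^ 2 / 2| := by
          rw [Real.norm_eq_abs, ← abs_mul, ← hsq]; ring_nf
      _ ≤ |t i| * (4 * |u i / t i| ^ 3) := by gcongr; exact abs_klFun_one_add_sub_le hi
      _ = 4 * |u i ^ 2 / t i| * |u i / t i| := by
          rw [← hsq, abs_mul, abs_pow]; ring
  refine squeeze_zero_norm' hbound ?_
  simpa using ((hL.abs.const_mul 4).mul hw.abs)

lemma tendsto_natFloor_add_mul_sub_div {a s : ι → ℝ} (x : ℝ) (hs : Tendsto s l atTop)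
    (ha : ∀ᶠ i in l, 0 ≤ a i + x * s i) :
    Tendsto (fun i => ((⌊a i + x * s i⌋₊ : ℝ) - a i) / s i) l (𝓝 x) := by
  rw [← tendsto_sub_nhds_zero_iff]
  refine squeeze_zero_norm' ?_ hs.inv_tendsto_atTop
  filter_upwards [ha, hs.eventually_gt_atTop 0] with i hy hs₀
  set y := a i + x * s i
  have hfloor : |(⌊y⌋₊ : ℝ) - y| ≤ 1 := by
    rw [abs_le]; constructor <;> linarith [Nat.floor_le hy, Nat.lt_floor_add_one y]
  have hsplit : ((⌊y⌋₊ : ℝ) - a i) / s i - x = ((⌊y⌋₊ : ℝ) - y) / s i := by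
    simp only [y]; field_simp; ring
  rw [hsplit, Real.norm_eq_abs, abs_div, abs_of_pos hs₀, div_le_iff₀ hs₀, Pi.inv_apply,
    inv_mul_cancel₀ hs₀.ne']
  exact hfloor

lemma eventually_nonneg_mul_sq_add_mul {s : ι → ℝ} {κ : ℝ} (hκ : 0 < κ) (x : ℝ)
    (hs : Tendsto s l atTop) : ∀ᶠ i in l, 0 ≤ κ * s i ^ 2 + x * s i := by
  filter_upwards [hs.eventually_ge_atTop 0, hs.eventually_ge_atTop (|x| / κ)] with i h₀ hx
  have : 0 ≤ κ * s i + x := by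
    rw [div_le_iff₀' hκ] at hx; linarith [neg_abs_le x]
  nlinarith

lemma tendsto_div_of_eq_mul_sq {u s t : ι → ℝ} {κ x : ℝ} (ht : ∀ i, t i = κ * s i ^ 2)
    (hs : Tendsto s l atTop) (hu : Tendsto (fun i => u i / s i) l (𝓝 x)) :
    Tendsto (fun i => u i / t i) l (𝓝 0) := by
  have h := (hu.const_mul κ⁻¹).mul hs.inv_tendsto_atTop
  rw [mul_zero] at h
  exact h.congr fun i => by rw [ht, Pi.inv_apply]; ring

lemma tendsto_sq_div_of_eq_mul_sq {u s t : ι → ℝ} {κ x : ℝ} (ht : ∀ i, t i = κ * s i ^ 2)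
    (hu : Tendsto (fun i => u i / s i) l (𝓝 x)) :
    Tendsto (fun i => u i ^ 2 / t i) l (𝓝 (κ⁻¹ * x ^ 2)) :=
  ((hu.pow 2).const_mul κ⁻¹).congr fun i => by rw [ht]; ring

lemma phi_sq : phi ^ 2 = phi + 1 := goldenRatio_sq

lemma one_lt_phi : 1 < phi := one_lt_goldenRatio

lemma phi_pos : 0 < phi := goldenRatio_pos

noncomputable def sfactorExponent (t u : ℝ) : ℝ :=
  phi ^ 2 * t * klFun (1 + -u / (phi ^ 2 * t)) - t * klFun (1 + u / t)
    - phi * t * klFun (1 + -2 * u / (phi * t))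

lemma tendsto_sfactorExponent {t u : ι → ℝ} {L : ℝ}
    (hw : Tendsto (fun i => u i / t i) l (𝓝 0))
    (hL : Tendsto (fun i => u i ^ 2 / t i) l (𝓝 L)) :
    Tendsto (fun i => sfactorExponent (t i) (u i)) l (𝓝 (-(5 / (2 * phi)) * L)) := by
  have hphi := phi_pos.ne'
  have h₁ := tendsto_mul_klFun_one_add_div (t := fun i => phi ^ 2 * t i) (u := fun i => -u i)
    (by simpa using (hw.mul_const (-(phi ^ 2)⁻¹)).congr fun i => by ring)
    ((hL.div_const (phi ^ 2)).congr fun i => by ring)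
  have h₂ := tendsto_mul_klFun_one_add_div hw hL
  have h₃ := tendsto_mul_klFun_one_add_div (t := fun i => phi * t i) (u := fun i => -2 * u i)
    (by simpa using (hw.mul_const (-2 / phi)).congr fun i => by ring)
    ((hL.mul_const (4 / phi)).congr fun i => by ring)
  have hlim : L / phi ^ 2 / 2 - L / 2 - L * (4 / phi) / 2 = -(5 / (2 * phi)) * L := by
    field_simp
    linear_combination (-L) * phi_sq
  rw [← hlim]
  exact (h₁.sub h₂).sub h₃

lemma Sfactor_eq_exp_log {n k : ℕ} (hk : 0 < k) (hkn : 2 * k < n) :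
    Sfactor n k = exp (((n : ℝ) - k) * log ((n : ℝ) - k) - k * log k
      - ((n : ℝ) - 2 * k) * log ((n : ℝ) - 2 * k) - n * log phi) := by
  have hk' : (0 : ℝ) < k := by exact_mod_cast hk
  have hkn' : (2 * k : ℝ) < n := by exact_mod_cast hkn
  rw [Sfactor, rpow_def_of_pos phi_pos, rpow_def_of_pos (by linarith),
    rpow_def_of_pos hk', rpow_def_of_pos (by linarith), ← exp_add, ← exp_add, ← exp_sub]
  ring_nf

lemma Sfactor_eq_exp_sfactorExponent {n k : ℕ} (hk : 0 < k) (hkn : 2 * k < n) :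
    Sfactor n k = exp (sfactorExponent (cLead n) (k - cLead n)) := by
  set t := cLead n
  set u := (k : ℝ) - t
  have hphi := phi_pos
  have hn : (n : ℝ) = (phi + 2) * t := by simp only [t, cLead]; field_simp
  have hk' : (k : ℝ) = t + u := by ring
  have hkn' : (2 * k : ℝ) < n := by exact_mod_cast hkn
  have e₁ : (n : ℝ) - k = phi ^ 2 * t + -u := by rw [hn, phi_sq]; ring
  have e₂ : (n : ℝ) - 2 * k = phi * t + -2 * u := by rw [hn]; ring
  have hk₀ : (0 : ℝ) < k := by exact_mod_cast hk
  have ht : 0 < t := by nlinarith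
  rw [Sfactor_eq_exp_log hk hkn, e₁, e₂, hk', hn, sfactorExponent]
  congr 1
  rw [mul_log_add_eq (by positivity) (by linarith), mul_log_add_eq ht (by linarith),
    mul_log_add_eq (by positivity) (by linarith), log_mul (by positivity) ht.ne',
    log_mul hphi.ne' ht.ne', log_pow]
  linear_combination (t * log t + 2 * t * log phi) * phi_sq

lemma cLead_eq_mul_sLead_sq (n : ℕ) : cLead n = 5 / phi * sLead n ^ 2 := by
  have hphi := phi_pos
  rw [sLead, sq_sqrt (by positivity), cLead]
  field_simp

lemma tendsto_sLead_atTop : Tendsto sLead atTop atTop :=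
  tendsto_sqrt_atTop.comp <| (tendsto_natCast_atTop_atTop.const_mul_atTop phi_pos).atTop_div_const
    (mul_pos (by norm_num) (by linarith [phi_pos]))

lemma pos_and_two_mul_lt_of_abs_div_cLead_lt {n k : ℕ} (hn : 0 < n)
    (hk : |((k : ℝ) - cLead n) / cLead n| < 1 / 2) :
    0 < k ∧ 2 * k < n := by
  have ht : 0 < cLead n := div_pos (by exact_mod_cast hn) (by linarith [phi_pos])
  rw [abs_div, abs_of_pos ht, div_lt_iff₀ ht, abs_lt] at hk
  have hn' : (n : ℝ) = (phi + 2) * cLead n := by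
    have : phi + 2 ≠ 0 := by linarith [phi_pos]
    rw [cLead]; field_simp
  constructor
  · exact_mod_cast (show (0 : ℝ) < k by linarith)
  · exact_mod_cast (show (2 * k : ℝ) < n by nlinarith [one_lt_phi])

/-- Analysis of the exponential factor: with `k_n = ⌊c(n) + x·s(n)⌋`,
`S_n(k_n) → e^{-x²/2}` as `n → ∞`. -/
theorem exponential_factor_limit (x : ℝ) :
    Tendsto (fun n : ℕ => Sfactor n ⌊cLead n + x * sLead n⌋₊)
      atTop (nhds (Real.exp (-x ^ 2 / 2))) := by
  have hphi := phi_pos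
  have hκ : 0 < 5 / phi := div_pos (by norm_num) hphi
  set u : ℕ → ℝ := fun n => ⌊cLead n + x * sLead n⌋₊ - cLead n
  have hus : Tendsto (fun n => u n / sLead n) atTop (𝓝 x) := by
    simp only [u, cLead_eq_mul_sLead_sq]
    exact tendsto_natFloor_add_mul_sub_div x tendsto_sLead_atTop
      (eventually_nonneg_mul_sq_add_mul hκ x tendsto_sLead_atTop)
  have hut := tendsto_div_of_eq_mul_sq cLead_eq_mul_sLead_sq tendsto_sLead_atTop hus
  have hexp : Tendsto (fun n => sfactorExponent (cLead n) (u n)) atTop (𝓝 (-x ^ 2 / 2)) := by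
    convert tendsto_sfactorExponent hut (tendsto_sq_div_of_eq_mul_sq cLead_eq_mul_sLead_sq hus)
      using 2
    field_simp
  refine ((continuous_exp.tendsto _).comp hexp).congr' ?_
  filter_upwards [eventually_gt_atTop 0, hut.eventually (Metric.ball_mem_nhds 0 one_half_pos)]
    with n hn hw
  rw [dist_zero_right, Real.norm_eq_abs] at hw
  obtain ⟨hk, hkn⟩ := pos_and_two_mul_lt_of_abs_div_cLead_lt hn hw
  exact (Sfactor_eq_exp_sfactorExponent hk hkn).symm
end

section
/- Every positive integer N has a unique far-difference representation: there is exactly one pair (P, Q) of finite sets of positive integers such that any two distinct elements of P differ by at least 4, any two distinct elements of Q differ by at least 4, every element of P differs from every element of Q by at least 3, and N = ∑_{i∈P} F_i - ∑_{j∈Q} F_j. -/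
/-- `F n` is the `n`-th Fibonacci number in the paper's indexing:
`F 1 = 1, F 2 = 2, F 3 = 3, F 4 = 5`, i.e. `F n = fib (n+1)`. -/
def F (n : ℕ) : ℕ := Nat.fib (n + 1)

/-- `(P, Q)` is a far-difference representation of the integer `N`: `P` and `Q`
are finite sets of positive indices, same-sign indices differ by at least 4,
opposite-sign indices differ by at least 3, and `N = ∑_{i∈P} F_i - ∑_{j∈Q} F_j`. -/
def IsFarDifference (N : ℤ) (P Q : Finset ℕ) : Prop :=
  (∀ i ∈ P, 0 < i) ∧ (∀ j ∈ Q, 0 < j) ∧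
  (∀ i ∈ P, ∀ j ∈ P, i < j → i + 4 ≤ j) ∧
  (∀ i ∈ Q, ∀ j ∈ Q, i < j → i + 4 ≤ j) ∧
  (∀ i ∈ P, ∀ j ∈ Q, i + 3 ≤ j ∨ j + 3 ≤ i) ∧
  N = (∑ i ∈ P, (F i : ℤ)) - ∑ j ∈ Q, (F j : ℤ)

/-- `S n = F n + F (n-4) + F (n-8) + ⋯`. -/
def FD_S : ℕ → ℕ
  | 0 => 0
  | (n+1) => F (n+1) + FD_S (n - 3)

lemma FD_F_pos (n : ℕ) : 0 < F n := Nat.fib_pos.mpr (by omega)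

lemma FD_S_zero : FD_S 0 = 0 := by simp [FD_S]

lemma FD_S_succ (n : ℕ) : FD_S (n+1) = F (n+1) + FD_S (n-3) := by simp [FD_S]

lemma FD_S_eq (n : ℕ) (h : 1 ≤ n) : FD_S n = F n + FD_S (n - 4) := by
  obtain ⟨m, rfl⟩ : ∃ m, n = m + 1 := ⟨n - 1, by omega⟩
  rw [FD_S_succ, show m + 1 - 4 = m - 3 by omega]

lemma FD_F1 : F 1 = 1 := rfl
lemma FD_F2 : F 2 = 2 := rfl
lemma FD_F3 : F 3 = 3 := rfl
lemma FD_F4 : F 4 = 5 := rfl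

lemma FD_S1 : FD_S 1 = 1 := by rw [FD_S_eq 1 (by omega)]; simp [FD_S_zero, FD_F1]
lemma FD_S2 : FD_S 2 = 2 := by rw [FD_S_eq 2 (by omega)]; simp [FD_S_zero, FD_F2]
lemma FD_S3 : FD_S 3 = 3 := by rw [FD_S_eq 3 (by omega)]; simp [FD_S_zero, FD_F3]
lemma FD_S4 : FD_S 4 = 5 := by rw [FD_S_eq 4 (by omega)]; simp [FD_S_zero, FD_F4]

lemma FD_S_lt_succ : ∀ n, FD_S n < FD_S (n+1) := by
  intro n
  induction n using Nat.strong_induction_on with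
  | _ n ih =>
    rcases n with _ | (_ | (_ | (_ | m)))
    · rw [FD_S_zero, FD_S1]; omega
    · rw [FD_S1, FD_S2]; omega
    · rw [FD_S2, FD_S3]; omega
    · rw [FD_S3, FD_S4]; omega
    · show FD_S (m+4) < FD_S (m+5)
      have h1 : FD_S (m+4) = F (m+4) + FD_S m := FD_S_eq (m+4) (by omega)
      have h2 : FD_S (m+5) = F (m+5) + FD_S (m+1) := FD_S_eq (m+5) (by omega)
      have h3 : FD_S m < FD_S (m+1) := ih m (by omega)
      have h4 : F (m+4) < F (m+5) := Nat.fib_lt_fib_succ (by omega)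
      omega

lemma FD_S_strictMono : StrictMono FD_S := strictMono_nat_of_lt_succ FD_S_lt_succ

lemma FD_S_mono : Monotone FD_S := FD_S_strictMono.monotone

lemma FD_F_S (n : ℕ) (hn : 1 ≤ n) : F n = FD_S (n-1) + FD_S (n-3) + 1 := by
  induction n using Nat.strong_induction_on with
  | _ n ih =>
    rcases n with _ | (_ | (_ | m))
    · omega
    · simp [FD_F1, FD_S_zero]
    · norm_num [FD_F2, FD_S1, FD_S_zero]
    · show F (m+3) = FD_S (m+2) + FD_S m + 1
      have h1 : F (m+1) = FD_S m + FD_S (m-2) + 1 := ih (m+1) (by omega) (by omega)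
      have h2 : FD_S (m+2) = F (m+2) + FD_S (m-2) := FD_S_eq (m+2) (by omega)
      have h3 : F (m+3) = F (m+1) + F (m+2) := Nat.fib_add_two (n := m+2)
      omega

lemma FD_sum_le : ∀ (n : ℕ) (P : Finset ℕ), (∀ i ∈ P, 0 < i) → (∀ i ∈ P, i ≤ n) →
    (∀ i ∈ P, ∀ j ∈ P, i < j → i + 4 ≤ j) → ∑ i ∈ P, F i ≤ FD_S n := by
  intro n
  induction n using Nat.strong_induction_on with
  | _ n ih =>
    intro P hpos hle hgap
    rcases P.eq_empty_or_nonempty with rfl | hne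
    · simp
    · set m := P.max' hne with hm
      have hmP : m ∈ P := P.max'_mem hne
      have hm1 : 1 ≤ m := hpos m hmP
      have hmn : m ≤ n := hle m hmP
      have herase : ∀ i ∈ P.erase m, i ≤ m - 4 := by
        intro i hi
        obtain ⟨hne', hiP⟩ := Finset.mem_erase.mp hi
        have h1 := P.le_max' i hiP
        have h2 := hgap i hiP m hmP (lt_of_le_of_ne h1 hne')
        omega
      have hb : ∑ i ∈ P.erase m, F i ≤ FD_S (m - 4) := by
        apply ih (m-4) (by omega)
        · intro i hi; exact hpos i (Finset.mem_erase.mp hi).2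
        · exact herase
        · intro i hi j hj hij
          exact hgap i (Finset.mem_erase.mp hi).2 j (Finset.mem_erase.mp hj).2 hij
      have hsplit : ∑ i ∈ P, F i = F m + ∑ i ∈ P.erase m, F i :=
        (Finset.add_sum_erase _ _ hmP).symm
      have hSm : FD_S m = F m + FD_S (m - 4) := FD_S_eq m hm1
      have hle2 : FD_S m ≤ FD_S n := FD_S_mono hmn
      omega

lemma IsFarDifference.fdswap {N : ℤ} {P Q : Finset ℕ} (h : IsFarDifference N P Q) :
    IsFarDifference (-N) Q P := by
  obtain ⟨hP, hQ, hgP, hgQ, hcross, hsum⟩ := h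
  exact ⟨hQ, hP, hgQ, hgP, fun i hi j hj => (hcross j hj i hi).symm, by omega⟩

lemma FD_rep_bounds {N : ℤ} {P Q : Finset ℕ} (h : IsFarDifference N P Q)
    {n : ℕ} (hnP : n ∈ P) (hmax : ∀ i ∈ P ∪ Q, i ≤ n) :
    (FD_S (n-1) : ℤ) < N ∧ N ≤ (FD_S n : ℤ) := by
  obtain ⟨hP, hQ, hgP, hgQ, hcross, hsum⟩ := h
  have hn1 : 1 ≤ n := hP n hnP
  have hQle : ∀ j ∈ Q, j ≤ n - 3 := by
    intro j hj
    have h1 := hmax j (Finset.mem_union_right _ hj)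
    rcases hcross n hnP j hj with h2 | h2 <;> omega
  have herase : ∀ i ∈ P.erase n, i ≤ n - 4 := by
    intro i hi
    obtain ⟨hne, hiP⟩ := Finset.mem_erase.mp hi
    have h1 := hmax i (Finset.mem_union_left _ hiP)
    have h2 := hgP i hiP n hnP (lt_of_le_of_ne h1 hne)
    omega
  have ha : ∑ i ∈ P.erase n, F i ≤ FD_S (n-4) :=
    FD_sum_le _ _ (fun i hi => hP i (Finset.mem_erase.mp hi).2) herase
      (fun i hi j hj hij => hgP i (Finset.mem_erase.mp hi).2 j (Finset.mem_erase.mp hj).2 hij)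
  have hb : ∑ j ∈ Q, F j ≤ FD_S (n-3) := FD_sum_le _ _ hQ hQle hgQ
  have hsplit : ∑ i ∈ P, F i = F n + ∑ i ∈ P.erase n, F i :=
    (Finset.add_sum_erase _ _ hnP).symm
  have hFe : F n = FD_S (n-1) + FD_S (n-3) + 1 := FD_F_S n hn1
  have hSe : FD_S n = F n + FD_S (n-4) := FD_S_eq n hn1
  have hcast : N = ((∑ i ∈ P, F i : ℕ) : ℤ) - ((∑ j ∈ Q, F j : ℕ) : ℤ) := by
    push_cast; exact hsum
  omega

lemma FD_pos_rep {N : ℤ} (hN : 0 < N) {P Q : Finset ℕ} (h : IsFarDifference N P Q) :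
    ∃ n ∈ P, (∀ i ∈ P ∪ Q, i ≤ n) ∧ (FD_S (n-1) : ℤ) < N ∧ N ≤ (FD_S n : ℤ) := by
  have hne : (P ∪ Q).Nonempty := by
    rcases Finset.eq_empty_or_nonempty (P ∪ Q) with he | hne
    · exfalso
      obtain ⟨hPe, hQe⟩ := Finset.union_eq_empty.mp he
      have hs := h.2.2.2.2.2
      rw [hPe, hQe] at hs
      simp at hs
      omega
    · exact hne
  set n := (P ∪ Q).max' hne with hn
  have hmem := (P ∪ Q).max'_mem hne
  have hmax : ∀ i ∈ P ∪ Q, i ≤ n := fun i hi => (P ∪ Q).le_max' i hi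
  rcases Finset.mem_union.mp hmem with hnP | hnQ
  · exact ⟨n, hnP, hmax, FD_rep_bounds h hnP hmax⟩
  · exfalso
    have hb := (FD_rep_bounds h.fdswap hnQ
      (fun i hi => hmax i (by rwa [Finset.union_comm]))).1
    have h0 : (0:ℤ) ≤ (FD_S (n-1) : ℤ) := by positivity
    omega

lemma FD_rep_zero {P Q : Finset ℕ} (h : IsFarDifference 0 P Q) : P = ∅ ∧ Q = ∅ := by
  rcases Finset.eq_empty_or_nonempty (P ∪ Q) with he | hne
  · exact Finset.union_eq_empty.mp he
  · exfalso
    set n := (P ∪ Q).max' hne with hn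
    have hmem := (P ∪ Q).max'_mem hne
    have hmax : ∀ i ∈ P ∪ Q, i ≤ n := fun i hi => (P ∪ Q).le_max' i hi
    have h0 : (0:ℤ) ≤ (FD_S (n-1) : ℤ) := by positivity
    rcases Finset.mem_union.mp hmem with hnP | hnQ
    · have hb := (FD_rep_bounds h hnP hmax).1
      omega
    · have hb := (FD_rep_bounds h.fdswap hnQ
        (fun i hi => hmax i (by rwa [Finset.union_comm]))).1
      omega

lemma FD_erase_rep {N : ℤ} {P Q : Finset ℕ} (h : IsFarDifference N P Q) {n : ℕ}
    (hn : n ∈ P) : IsFarDifference (N - F n) (P.erase n) Q := by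
  obtain ⟨hP, hQ, hgP, hgQ, hcross, hsum⟩ := h
  refine ⟨fun i hi => hP i (Finset.mem_erase.mp hi).2, hQ,
    fun i hi j hj => hgP i (Finset.mem_erase.mp hi).2 j (Finset.mem_erase.mp hj).2,
    hgQ, fun i hi => hcross i (Finset.mem_erase.mp hi).2, ?_⟩
  have hsplit : (F n : ℤ) + ∑ i ∈ P.erase n, (F i : ℤ) = ∑ i ∈ P, (F i : ℤ) :=
    Finset.add_sum_erase P (fun i => (F i : ℤ)) hn
  omega

lemma FD_uniq : ∀ k : ℕ, ∀ P Q P' Q' : Finset ℕ,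
    IsFarDifference (k:ℤ) P Q → IsFarDifference (k:ℤ) P' Q' → P = P' ∧ Q = Q' := by
  intro k
  induction k using Nat.strong_induction_on with
  | _ k ih =>
  intro P Q P' Q' h h'
  rcases Nat.eq_zero_or_pos k with rfl | hk
  · obtain ⟨e1, e2⟩ := FD_rep_zero (by simpa using h)
    obtain ⟨e3, e4⟩ := FD_rep_zero (by simpa using h')
    exact ⟨e1.trans e3.symm, e2.trans e4.symm⟩
  · have hk' : (0:ℤ) < (k:ℤ) := by exact_mod_cast hk
    obtain ⟨n, hnP, hmax, hb1, hb2⟩ := FD_pos_rep hk' h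
    obtain ⟨n', hnP', hmax', hb1', hb2'⟩ := FD_pos_rep hk' h'
    have hnn : n = n' := by
      have c1 : FD_S (n-1) < FD_S n' := by exact_mod_cast lt_of_lt_of_le hb1 hb2'
      have c2 : FD_S (n'-1) < FD_S n := by exact_mod_cast lt_of_lt_of_le hb1' hb2
      have d1 := FD_S_strictMono.lt_iff_lt.mp c1
      have d2 := FD_S_strictMono.lt_iff_lt.mp c2
      omega
    subst hnn
    have hM : IsFarDifference ((k:ℤ) - F n) (P.erase n) Q := FD_erase_rep h hnP
    have hM' : IsFarDifference ((k:ℤ) - F n) (P'.erase n) Q' := FD_erase_rep h' hnP'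
    have hkey : P.erase n = P'.erase n ∧ Q = Q' := by
      rcases le_or_gt ((F n : ℤ)) (k:ℤ) with hge | hlt
      · obtain ⟨m, hm⟩ : ∃ m : ℕ, (k:ℤ) - (F n : ℤ) = (m:ℤ) := ⟨k - F n, by omega⟩
        have hFp := FD_F_pos n
        have hmk : m < k := by omega
        rw [hm] at hM hM'
        exact ih m hmk _ _ _ _ hM hM'
      · obtain ⟨m, hm⟩ : ∃ m : ℕ, (m:ℤ) = (F n : ℤ) - (k:ℤ) := ⟨F n - k, by omega⟩
        have hn1 : 1 ≤ n := h.1 n hnP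
        have hFe : F n = FD_S (n-1) + FD_S (n-3) + 1 := FD_F_S n hn1
        have hmono : FD_S (n-3) ≤ FD_S (n-1) := FD_S_mono (by omega)
        have hmk : m < k := by omega
        have s1 := hM.fdswap
        have s2 := hM'.fdswap
        rw [show -((k:ℤ) - (F n : ℤ)) = (m:ℤ) by omega] at s1 s2
        obtain ⟨e1, e2⟩ := ih m hmk _ _ _ _ s1 s2
        exact ⟨e2, e1⟩
    refine ⟨?_, hkey.2⟩
    have hins : insert n (P.erase n) = insert n (P'.erase n) := by rw [hkey.1]
    rwa [Finset.insert_erase hnP, Finset.insert_erase hnP'] at hins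

lemma FD_exist : ∀ k : ℕ, 0 < k → ∃ P Q : Finset ℕ, IsFarDifference (k:ℤ) P Q := by
  intro k
  induction k using Nat.strong_induction_on with
  | _ k ih =>
  intro hk
  classical
  have hub : ∃ n, k ≤ FD_S n := ⟨k, FD_S_strictMono.le_apply⟩
  set n := Nat.find hub with hn
  have hle : k ≤ FD_S n := Nat.find_spec hub
  have hn1 : 1 ≤ n := by
    by_contra hc
    have h0 : n = 0 := by omega
    rw [h0, FD_S_zero] at hle
    omega
  have hlt : FD_S (n-1) < k := by
    have := Nat.find_min hub (m := n - 1) (by omega)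
    omega
  have hFe : F n = FD_S (n-1) + FD_S (n-3) + 1 := FD_F_S n hn1
  have hSe : FD_S n = F n + FD_S (n-4) := FD_S_eq n hn1
  rcases lt_trichotomy k (F n) with hcase | hcase | hcase
  · -- k < F n : subtract a negative part
    set K := F n - k with hK
    have hK1 : 1 ≤ K := by omega
    have hKle : K ≤ FD_S (n-3) := by omega
    have hKlt : K < k := by
      have hmono : FD_S (n-3) ≤ FD_S (n-1) := FD_S_mono (by omega)
      omega
    obtain ⟨P', Q', h'⟩ := ih K hKlt hK1
    have hKpos : (0:ℤ) < (K:ℤ) := by exact_mod_cast hK1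
    obtain ⟨m, hmP', hmax', hb1', hb2'⟩ := FD_pos_rep hKpos h'
    have hm1 : 1 ≤ m := h'.1 m hmP'
    have hmn : m ≤ n - 3 := by
      have c1 : FD_S (m-1) < FD_S (n-3) := by
        have : (FD_S (m-1):ℤ) < (FD_S (n-3):ℤ) :=
          lt_of_lt_of_le hb1' (by exact_mod_cast hKle)
        exact_mod_cast this
      have := FD_S_strictMono.lt_iff_lt.mp c1
      omega
    have hQ'le : ∀ j ∈ Q', j ≤ m - 3 := by
      intro j hj
      have hjm := hmax' j (Finset.mem_union_right _ hj)
      rcases h'.2.2.2.2.1 m hmP' j hj with hc | hc <;> omega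
    have hP'le : ∀ i ∈ P', i ≤ m := fun i hi => hmax' i (Finset.mem_union_left _ hi)
    have hnotin : n ∉ Q' := by
      intro hcon
      have h1 := hQ'le n hcon
      omega
    refine ⟨insert n Q', P', ?_, h'.1, ?_, h'.2.2.1, ?_, ?_⟩
    · intro i hi
      rcases Finset.mem_insert.mp hi with rfl | hi
      · omega
      · exact h'.2.1 i hi
    · intro i hi j hj hij
      rcases Finset.mem_insert.mp hi with rfl | hi <;>
        rcases Finset.mem_insert.mp hj with rfl | hj
      · omega
      · have h1 := hQ'le j hj; omega
      · have h1 := hQ'le i hi; have h2 := h'.2.1 i hi; omega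
      · exact h'.2.2.2.1 i hi j hj hij
    · intro i hi j hj
      rcases Finset.mem_insert.mp hi with rfl | hi
      · right; have h1 := hP'le j hj; omega
      · rcases h'.2.2.2.2.1 j hj i hi with hc | hc
        · right; omega
        · left; omega
    · rw [Finset.sum_insert hnotin]
      have hs := h'.2.2.2.2.2
      omega
  · exact ⟨{n}, ∅, by intro i hi; simp at hi; omega, by simp, by
      intro i hi j hj hij; simp at hi hj; omega, by simp, by simp, by
      simp [← hcase]⟩
  · -- k > F n : subtract a positive part
    set K := k - F n with hK
    have hK1 : 1 ≤ K := by omega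
    have hKle : K ≤ FD_S (n-4) := by omega
    have hKlt : K < k := by
      have := FD_F_pos n
      omega
    obtain ⟨P', Q', h'⟩ := ih K hKlt hK1
    have hKpos : (0:ℤ) < (K:ℤ) := by exact_mod_cast hK1
    obtain ⟨m, hmP', hmax', hb1', hb2'⟩ := FD_pos_rep hKpos h'
    have hm1 : 1 ≤ m := h'.1 m hmP'
    have hmn : m ≤ n - 4 := by
      have c1 : FD_S (m-1) < FD_S (n-4) := by
        have : (FD_S (m-1):ℤ) < (FD_S (n-4):ℤ) :=
          lt_of_lt_of_le hb1' (by exact_mod_cast hKle)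
        exact_mod_cast this
      have := FD_S_strictMono.lt_iff_lt.mp c1
      omega
    have hall : ∀ i ∈ P' ∪ Q', i ≤ n - 4 := fun i hi => le_trans (hmax' i hi) hmn
    have hnotin : n ∉ P' := by
      intro hcon
      have h1 := hall n (Finset.mem_union_left _ hcon)
      omega
    refine ⟨insert n P', Q', ?_, h'.2.1, ?_, h'.2.2.2.1, ?_, ?_⟩
    · intro i hi
      rcases Finset.mem_insert.mp hi with rfl | hi
      · omega
      · exact h'.1 i hi
    · intro i hi j hj hij
      rcases Finset.mem_insert.mp hi with rfl | hi <;>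
        rcases Finset.mem_insert.mp hj with rfl | hj
      · omega
      · have h1 := hall j (Finset.mem_union_left _ hj); have h2 := h'.1 j hj; omega
      · have h1 := hall i (Finset.mem_union_left _ hi); have h2 := h'.1 i hi; omega
      · exact h'.2.2.1 i hi j hj hij
    · intro i hi j hj
      rcases Finset.mem_insert.mp hi with rfl | hi
      · right; have h1 := hall j (Finset.mem_union_right _ hj)
        have h2 := h'.2.1 j hj; omega
      · exact h'.2.2.2.2.1 i hi j hj
    · rw [Finset.sum_insert hnotin]
      have hs := h'.2.2.2.2.2
      omega

/-- Alpert's theorem: every positive integer has a unique far-difference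
representation. -/
theorem far_difference_unique (N : ℕ) (hN : 0 < N) :
    ∃! PQ : Finset ℕ × Finset ℕ, IsFarDifference (N : ℤ) PQ.1 PQ.2 := by
  obtain ⟨P, Q, h⟩ := FD_exist N hN
  refine ⟨(P, Q), h, ?_⟩
  rintro ⟨P', Q'⟩ h'
  obtain ⟨e1, e2⟩ := FD_uniq N P' Q' P Q h' h
  simp [Prod.ext_iff, e1, e2]
end
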